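/- arXiv:1311.3079 — 2 statements merged into one kernel-verified Lean document; each statement's English description precedes it below -/
import Mathlib

section
/- Let Ω ⊂ ℝ² be a bounded open convex set, φ : closure(Ω) → [0,∞) continuous, x₁ ∈ closure(Ω), and t ≥ 0. Then the sublevel set { y ∈ closure(Ω) : d_φ(y,x₁) ≤ t } is compact and connected. -/
open MeasureTheory Metric Set Filter
open scoped ENNReal NNReal Topology

noncomputable section

abbrev E2 : Type := EuclideanSpace ℝ (Fin 2)

/-- Weighted geodesic distance `d_φ(x,y)` relative to `closure Ω`. -/
def geodDist (Ω : Set E2) (φ : E2 → ℝ) (x y : E2) : ℝ :=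
  sInf { L : ℝ | ∃ γ : ℝ → E2, (∃ K : ℝ≥0, LipschitzWith K γ) ∧
    (∀ t ∈ Icc (0:ℝ) 1, γ t ∈ closure Ω) ∧ γ 0 = x ∧ γ 1 = y ∧
    L = ∫ t in (0:ℝ)..1, φ (γ t) * ‖deriv γ t‖ }

/-! ### Auxiliary definitions and lemmas -/

def geodSet (Ω : Set E2) (φ : E2 → ℝ) (x y : E2) : Set ℝ :=
  { L : ℝ | ∃ γ : ℝ → E2, (∃ K : ℝ≥0, LipschitzWith K γ) ∧
    (∀ t ∈ Icc (0:ℝ) 1, γ t ∈ closure Ω) ∧ γ 0 = x ∧ γ 1 = y ∧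
    L = ∫ t in (0:ℝ)..1, φ (γ t) * ‖deriv γ t‖ }

theorem geodDist_eq (Ω : Set E2) (φ : E2 → ℝ) (x y : E2) :
    geodDist Ω φ x y = sInf (geodSet Ω φ x y) := rfl

/-- A decreasing intersection of compact connected sets is connected. -/
theorem inter_conn {X : Type*} [TopologicalSpace X] [T2Space X]
    (K : ℕ → Set X) (hc : ∀ n, IsCompact (K n)) (hconn : ∀ n, IsConnected (K n))
    (hmono : Antitone K) : IsConnected (⋂ n, K n) := by
  have hcl : ∀ n, IsClosed (K n) := fun n => (hc n).isClosed
  have hdir : Directed (· ⊇ ·) K := hmono.directed_ge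
  have hne : (⋂ n, K n).Nonempty :=
    IsCompact.nonempty_iInter_of_directed_nonempty_isCompact_isClosed K hdir
      (fun n => (hconn n).nonempty) hc hcl
  refine ⟨hne, ?_⟩
  have hKcl : IsClosed (⋂ n, K n) := isClosed_iInter hcl
  rw [isPreconnected_iff_subset_of_fully_disjoint_closed hKcl]
  intro u v hu hv hsub hduv
  have hKcomp : IsCompact (⋂ n, K n) := (hc 0).of_isClosed_subset hKcl (iInter_subset K 0)
  obtain ⟨U, V, hU, hV, hAU, hBV, hUV⟩ :=
    SeparatedNhds.of_isCompact_isCompact (hKcomp.inter_right hu)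
      (hKcomp.inter_right hv) (hduv.mono inter_subset_right inter_subset_right)
  have hsubUV : (⋂ n, K n) ⊆ U ∪ V := fun x hx => by
    rcases hsub hx with h | h
    · exact Or.inl (hAU ⟨hx, h⟩)
    · exact Or.inr (hBV ⟨hx, h⟩)
  have : ∃ n, K n ⊆ U ∪ V := by
    by_contra h
    push_neg at h
    have h' : ∀ n, (K n \ (U ∪ V)).Nonempty := by
      intro n
      rcases not_subset.1 (h n) with ⟨x, hx, hx'⟩
      exact ⟨x, hx, hx'⟩
    have := IsCompact.nonempty_iInter_of_directed_nonempty_isCompact_isClosed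
      (fun n => K n \ (U ∪ V))
      (fun m n => by
        rcases hdir m n with ⟨k, hk1, hk2⟩
        exact ⟨k, diff_subset_diff_left hk1, diff_subset_diff_left hk2⟩)
      h' (fun n => (hc n).diff (hU.union hV))
      (fun n => (hcl n).sdiff (hU.union hV))
    rcases this with ⟨x, hx⟩
    simp only [mem_iInter, mem_diff] at hx
    exact (hx 0).2 (hsubUV (mem_iInter.2 fun n => (hx n).1))
  rcases this with ⟨n, hn⟩
  rcases (hconn n).isPreconnected.subset_or_subset hU hV hUV hn with h | h
  · left
    intro x hx
    rcases hsub hx with h' | h'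
    · exact h'
    · exact absurd (h (mem_iInter.1 hx n)) (fun hxU => hUV.ne_of_mem hxU (hBV ⟨hx, h'⟩) rfl)
  · right
    intro x hx
    rcases hsub hx with h' | h'
    · exact absurd (h (mem_iInter.1 hx n)) (fun hxV => hUV.ne_of_mem (hAU ⟨hx, h'⟩) hxV rfl)
    · exact h'

/-- Chain rule for precomposition with an affine map, valid at every point. -/
theorem deriv_comp_affine (γ : ℝ → E2) (c d : ℝ) (hc : c ≠ 0) (u : ℝ) :
    deriv (fun t => γ (c * t + d)) u = c • deriv γ (c * u + d) := by
  by_cases h : DifferentiableAt ℝ γ (c * u + d)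
  · have haff : HasDerivAt (fun t : ℝ => c * t + d) c u := by
      simpa using ((hasDerivAt_id u).const_mul c).add_const d
    exact (h.hasDerivAt.scomp u haff).deriv
  · have h2 : ¬ DifferentiableAt ℝ (fun t => γ (c * t + d)) u := by
      intro hdiff
      apply h
      have hinner : DifferentiableAt ℝ (fun v : ℝ => (v - d) / c) (c * u + d) :=
        (((hasDerivAt_id (c*u+d)).sub_const d).div_const c).differentiableAt
      have hval : (c * u + d - d) / c = u := by field_simp; ring
      have hcomp : DifferentiableAt ℝ ((fun t => γ (c * t + d)) ∘ (fun v : ℝ => (v - d) / c))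
          (c * u + d) := DifferentiableAt.comp _ (by rw [hval]; exact hdiff) hinner
      refine hcomp.congr_of_eventuallyEq (Eventually.of_forall fun v => ?_)
      simp only [Function.comp]
      field_simp
      rw [sub_add_cancel]
    rw [deriv_zero_of_not_differentiableAt h, deriv_zero_of_not_differentiableAt h2, smul_zero]

theorem lipschitz_affine (c d : ℝ) : LipschitzWith ‖c‖₊ (fun t : ℝ => c * t + d) := by
  refine LipschitzWith.of_dist_le_mul fun s t => ?_
  simp only [Real.dist_eq, coe_nnnorm, Real.norm_eq_abs]
  rw [← abs_mul]
  apply le_of_eq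
  congr 1
  ring

/-- Gluing two Lipschitz maps that agree at the junction point. -/
theorem lipschitz_glue (f g : ℝ → E2) (c : ℝ) (Kf Kg : ℝ≥0) (hf : LipschitzWith Kf f)
    (hg : LipschitzWith Kg g) (hfg : f c = g c) :
    LipschitzWith (max Kf Kg) (fun t => if t ≤ c then f t else g t) := by
  have hKf : (Kf : ℝ) ≤ ((max Kf Kg : ℝ≥0) : ℝ) := by exact_mod_cast le_max_left Kf Kg
  have hKg : (Kg : ℝ) ≤ ((max Kf Kg : ℝ≥0) : ℝ) := by exact_mod_cast le_max_right Kf Kg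
  have key : ∀ s t : ℝ, s ≤ t →
      dist (if s ≤ c then f s else g s) (if t ≤ c then f t else g t)
        ≤ ((max Kf Kg : ℝ≥0) : ℝ) * dist s t := by
    intro s t hst
    by_cases htc : t ≤ c
    · have hsc : s ≤ c := hst.trans htc
      rw [if_pos hsc, if_pos htc]
      exact (hf.dist_le_mul s t).trans (mul_le_mul_of_nonneg_right hKf dist_nonneg)
    · by_cases hsc : s ≤ c
      · rw [if_pos hsc, if_neg htc]
        have h1 : dist (f s) (g t) ≤ dist (f s) (f c) + dist (g c) (g t) := by
          rw [hfg]; exact dist_triangle _ _ _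
        have h2 : dist (f s) (f c) ≤ ((max Kf Kg : ℝ≥0) : ℝ) * dist s c :=
          (hf.dist_le_mul _ _).trans (mul_le_mul_of_nonneg_right hKf dist_nonneg)
        have h3 : dist (g c) (g t) ≤ ((max Kf Kg : ℝ≥0) : ℝ) * dist c t :=
          (hg.dist_le_mul _ _).trans (mul_le_mul_of_nonneg_right hKg dist_nonneg)
        have h4 : dist s c + dist c t = dist s t := by
          rw [Real.dist_eq, Real.dist_eq, Real.dist_eq]
          rw [abs_of_nonpos (by linarith), abs_of_nonpos (by linarith [not_le.1 htc]),
            abs_of_nonpos (by linarith)]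
          ring
        calc dist (f s) (g t) ≤ ((max Kf Kg : ℝ≥0) : ℝ) * dist s c
              + ((max Kf Kg : ℝ≥0) : ℝ) * dist c t := h1.trans (add_le_add h2 h3)
          _ = ((max Kf Kg : ℝ≥0) : ℝ) * (dist s c + dist c t) := by ring
          _ = ((max Kf Kg : ℝ≥0) : ℝ) * dist s t := by rw [h4]
      · rw [if_neg hsc, if_neg htc]
        exact (hg.dist_le_mul s t).trans (mul_le_mul_of_nonneg_right hKg dist_nonneg)
  refine LipschitzWith.of_dist_le_mul fun s t => ?_
  rcases le_total s t with h | h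
  · exact key s t h
  · rw [dist_comm, dist_comm s t]; exact key t s h

theorem adm_integrable {Ω : Set E2} {φ : E2 → ℝ} (hφc : ContinuousOn φ (closure Ω))
    {γ : ℝ → E2} {K : ℝ≥0} (hγl : LipschitzWith K γ)
    (hγΩ : ∀ t ∈ Icc (0:ℝ) 1, γ t ∈ closure Ω)
    {a b : ℝ} (ha : 0 ≤ a) (hab : a ≤ b) (hb : b ≤ 1) :
    IntervalIntegrable (fun t => φ (γ t) * ‖deriv γ t‖) volume a b := by
  have hsub : Ioc a b ⊆ Icc (0:ℝ) 1 := fun t ht => ⟨ha.trans ht.1.le, ht.2.trans hb⟩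
  have hcont : ContinuousOn (fun t => φ (γ t)) (Icc (0:ℝ) 1) :=
    hφc.comp hγl.continuous.continuousOn hγΩ
  obtain ⟨Mφ, hMφ⟩ := isCompact_Icc.exists_bound_of_continuousOn hcont
  have hMφ0 : 0 ≤ Mφ := le_trans (norm_nonneg _) (hMφ 0 ⟨le_refl 0, zero_le_one⟩)
  rw [intervalIntegrable_iff_integrableOn_Ioc_of_le hab]
  have hmeas : AEStronglyMeasurable (fun t => φ (γ t) * ‖deriv γ t‖)
      (volume.restrict (Ioc a b)) := by
    refine AEStronglyMeasurable.mul ?_ ((measurable_deriv γ).norm.aestronglyMeasurable)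
    exact (hcont.mono hsub).aestronglyMeasurable measurableSet_Ioc
  refine Integrable.mono' (integrable_const (Mφ * K)) hmeas ?_
  refine (ae_restrict_iff' measurableSet_Ioc).2 (ae_of_all _ fun u hu => ?_)
  rw [norm_mul, norm_norm]
  exact mul_le_mul (hMφ u (hsub hu)) (norm_deriv_le_of_lipschitz hγl) (norm_nonneg _) hMφ0

theorem adm_nonneg {Ω : Set E2} {φ : E2 → ℝ} (hφ : ∀ z ∈ closure Ω, 0 ≤ φ z)
    {γ : ℝ → E2} (hγΩ : ∀ t ∈ Icc (0:ℝ) 1, γ t ∈ closure Ω)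
    {a b : ℝ} (ha : 0 ≤ a) (hab : a ≤ b) (hb : b ≤ 1) :
    0 ≤ ∫ t in a..b, φ (γ t) * ‖deriv γ t‖ :=
  intervalIntegral.integral_nonneg hab fun u hu =>
    mul_nonneg (hφ _ (hγΩ u ⟨ha.trans hu.1, hu.2.trans hb⟩)) (norm_nonneg _)

theorem reparam_integral (φ : E2 → ℝ) (γ : ℝ → E2) {a b : ℝ} (hab : a < b) :
    ∫ u in (0:ℝ)..1, φ (γ ((b-a)*u + a)) * ‖deriv (fun t => γ ((b-a)*t + a)) u‖
      = ∫ v in a..b, φ (γ v) * ‖deriv γ v‖ := by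
  have hc : b - a ≠ 0 := sub_ne_zero.2 hab.ne'
  have h1 : ∀ u : ℝ, ‖deriv (fun t => γ ((b-a)*t + a)) u‖ = (b-a) * ‖deriv γ ((b-a)*u + a)‖ := by
    intro u
    rw [deriv_comp_affine γ _ a hc, norm_smul, Real.norm_eq_abs, abs_of_pos (sub_pos.2 hab)]
  calc ∫ u in (0:ℝ)..1, φ (γ ((b-a)*u + a)) * ‖deriv (fun t => γ ((b-a)*t + a)) u‖
      = ∫ u in (0:ℝ)..1, (b-a) * ((fun v => φ (γ v) * ‖deriv γ v‖) ((b-a)*u + a)) := by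
        refine intervalIntegral.integral_congr fun u _ => ?_
        simp only [h1]
        ring
    _ = (b-a) • ∫ u in (0:ℝ)..1, (fun v => φ (γ v) * ‖deriv γ v‖) ((b-a)*u + a) := by
        rw [intervalIntegral.integral_const_mul]; rfl
    _ = ∫ v in (b-a)*0 + a..(b-a)*1 + a, φ (γ v) * ‖deriv γ v‖ :=
      by exact intervalIntegral.smul_integral_comp_mul_add (fun v => φ (γ v) * ‖deriv γ v‖) (b-a) a
    _ = ∫ v in a..b, φ (γ v) * ‖deriv γ v‖ := by norm_num

variable {Ω : Set E2} {φ : E2 → ℝ}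

theorem bddBelow_geodSet (hφ : ∀ z ∈ closure Ω, 0 ≤ φ z) (x y : E2) :
    BddBelow (geodSet Ω φ x y) := by
  refine ⟨0, fun L hL => ?_⟩
  obtain ⟨γ, -, hγΩ, -, -, hint⟩ := hL
  rw [hint]
  exact adm_nonneg hφ hγΩ le_rfl zero_le_one le_rfl

theorem segment_mem (hconv : Convex ℝ (closure Ω)) {x y : E2}
    (hx : x ∈ closure Ω) (hy : y ∈ closure Ω) :
    (∫ s in (0:ℝ)..1, φ (x + s • (y - x)) * ‖y - x‖) ∈ geodSet Ω φ x y := by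
  refine ⟨fun t => x + t • (y - x), ⟨‖y - x‖₊, ?_⟩, ?_, by simp, by simp, ?_⟩
  · refine LipschitzWith.of_dist_le_mul fun s t => ?_
    rw [dist_eq_norm]
    have : x + s • (y - x) - (x + t • (y - x)) = (s - t) • (y - x) := by
      rw [sub_smul]; abel
    rw [this, norm_smul, coe_nnnorm, Real.dist_eq, Real.norm_eq_abs, mul_comm]
  · exact fun t ht => hconv.add_smul_sub_mem hx hy ht
  · refine intervalIntegral.integral_congr fun u _ => ?_
    have : deriv (fun t : ℝ => x + t • (y - x)) u = y - x := by
      have : HasDerivAt (fun t : ℝ => x + t • (y - x)) ((1:ℝ) • (y - x)) u :=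
        ((hasDerivAt_id u).smul_const (y - x)).const_add x
      rw [this.deriv, one_smul]
    rw [this]

theorem geodDist_self_nonpos (hφ : ∀ z ∈ closure Ω, 0 ≤ φ z) {x : E2}
    (hx : x ∈ closure Ω) : geodDist Ω φ x x ≤ 0 := by
  rw [geodDist_eq]
  refine csInf_le (bddBelow_geodSet hφ x x) ⟨fun _ => x, ⟨0, LipschitzWith.const x⟩,
    fun t _ => hx, rfl, rfl, ?_⟩
  simp [deriv_const]

theorem geodDist_le_subcurve (hφ : ∀ z ∈ closure Ω, 0 ≤ φ z)
    {γ : ℝ → E2} {K : ℝ≥0} (hγl : LipschitzWith K γ)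
    (hγΩ : ∀ t ∈ Icc (0:ℝ) 1, γ t ∈ closure Ω) {s : ℝ} (hs : s ∈ Icc (0:ℝ) 1) :
    geodDist Ω φ (γ s) (γ 1) ≤ ∫ v in s..1, φ (γ v) * ‖deriv γ v‖ := by
  rcases eq_or_lt_of_le hs.2 with h1 | h1
  · rw [h1, intervalIntegral.integral_same]
    exact geodDist_self_nonpos hφ (hγΩ 1 ⟨zero_le_one, le_rfl⟩)
  · rw [geodDist_eq]
    refine csInf_le (bddBelow_geodSet hφ _ _) ⟨fun u => γ ((1 - s) * u + s),
      ⟨K * ‖(1:ℝ) - s‖₊, hγl.comp (lipschitz_affine (1 - s) s)⟩, ?_, ?_, ?_, ?_⟩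
    · intro u hu
      refine hγΩ _ ⟨?_, ?_⟩
      · have : 0 ≤ (1 - s) * u := mul_nonneg (by linarith) hu.1
        linarith [hs.1]
      · nlinarith [hu.2, hs.1, hu.1]
    · norm_num
    · norm_num
    · exact (reparam_integral φ γ h1).symm

theorem concat_cost (hφc : ContinuousOn φ (closure Ω))
    (hconv : Convex ℝ (closure Ω)) {M : ℝ} (hM : ∀ w ∈ closure Ω, φ w ≤ M)
    {y z : E2} (hy : y ∈ closure Ω) (hz : z ∈ closure Ω)
    {γ : ℝ → E2} {K : ℝ≥0} (hγl : LipschitzWith K γ)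
    (hγΩ : ∀ t ∈ Icc (0:ℝ) 1, γ t ∈ closure Ω) (hγ0 : γ 0 = z) :
    ∃ J ∈ geodSet Ω φ y (γ 1), J ≤ M * ‖y - z‖ + ∫ v in (0:ℝ)..1, φ (γ v) * ‖deriv γ v‖ := by
  set v0 := z - y with hv0
  set f : ℝ → E2 := fun t => y + (2 * t) • v0 with hfdef
  set g : ℝ → E2 := fun t => γ (2 * t + (-1)) with hgdef
  set γh : ℝ → E2 := fun t => if t ≤ 1/2 then f t else g t with hγh
  have hf : LipschitzWith (2 * ‖v0‖₊) f := by
    refine LipschitzWith.of_dist_le_mul fun s t => ?_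
    rw [dist_eq_norm]
    have : f s - f t = (2*s - 2*t) • v0 := by rw [hfdef]; simp only; rw [sub_smul]; abel
    rw [this, norm_smul, Real.norm_eq_abs, Real.dist_eq]
    push_cast
    have h2 : |2*s - 2*t| = 2 * |s - t| := by
      rw [show 2*s - 2*t = 2*(s-t) by ring, abs_mul, abs_two]
    rw [h2]
    apply le_of_eq
    ring
  have hg : LipschitzWith (K * ‖(2:ℝ)‖₊) g := hγl.comp (lipschitz_affine 2 (-1))
  have hjoin : f (1/2) = g (1/2) := by
    show y + ((2:ℝ) * (1/2)) • v0 = γ (2 * (1/2) + (-1))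
    rw [show (2:ℝ) * (1/2) + (-1) = 0 by norm_num, hγ0, hv0,
      show (2:ℝ) * (1/2) = 1 by norm_num, one_smul]
    abel
  have hγhl : LipschitzWith (max (2 * ‖v0‖₊) (K * ‖(2:ℝ)‖₊)) γh :=
    lipschitz_glue f g (1/2) _ _ hf hg hjoin
  have hfmem : ∀ t ∈ Icc (0:ℝ) (1/2), f t ∈ closure Ω := by
    intro t ht
    have : f t = y + (2*t) • (z - y) := rfl
    rw [this]
    exact hconv.add_smul_sub_mem hy hz ⟨by linarith [ht.1], by linarith [ht.2]⟩
  have hγhΩ : ∀ t ∈ Icc (0:ℝ) 1, γh t ∈ closure Ω := by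
    intro t ht
    rw [hγh]; simp only
    by_cases h : t ≤ 1/2
    · rw [if_pos h]; exact hfmem t ⟨ht.1, h⟩
    · rw [if_neg h]
      exact hγΩ _ ⟨by linarith [not_le.1 h], by linarith [ht.2]⟩
  have hγh0 : γh 0 = y := by
    show (if (0:ℝ) ≤ 1/2 then f 0 else g 0) = y
    rw [if_pos (by norm_num : (0:ℝ) ≤ 1/2)]
    show y + ((2:ℝ) * 0) • v0 = y
    rw [mul_zero, zero_smul, add_zero]
  have hγh1 : γh 1 = γ 1 := by
    show (if (1:ℝ) ≤ 1/2 then f 1 else g 1) = γ 1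
    rw [if_neg (by norm_num : ¬ (1:ℝ) ≤ 1/2)]
    show γ (2 * 1 + (-1)) = γ 1
    norm_num
  refine ⟨∫ u in (0:ℝ)..1, φ (γh u) * ‖deriv γh u‖,
    ⟨γh, ⟨_, hγhl⟩, hγhΩ, hγh0, hγh1, rfl⟩, ?_⟩
  have hint1 : IntervalIntegrable (fun u => φ (γh u) * ‖deriv γh u‖) volume 0 (1/2) :=
    adm_integrable hφc hγhl hγhΩ le_rfl (by norm_num) (by norm_num)
  have hint2 : IntervalIntegrable (fun u => φ (γh u) * ‖deriv γh u‖) volume (1/2) 1 :=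
    adm_integrable hφc hγhl hγhΩ (by norm_num) (by norm_num) le_rfl
  rw [← intervalIntegral.integral_add_adjacent_intervals hint1 hint2]
  have hae : ∀ᵐ u : ℝ, u ≠ 1/2 := by
    rw [ae_iff]
    simp only [ne_eq, not_not, setOf_eq_eq_singleton]
    exact Real.volume_singleton
  have hpart1 : (∫ u in (0:ℝ)..(1/2), φ (γh u) * ‖deriv γh u‖) ≤ M * ‖y - z‖ := by
    have hcongr : (∫ u in (0:ℝ)..(1/2), φ (γh u) * ‖deriv γh u‖)
        = ∫ u in (0:ℝ)..(1/2), φ (f u) * (2 * ‖v0‖) := by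
      refine intervalIntegral.integral_congr_ae ?_
      filter_upwards [hae] with u hu hu'
      rw [uIoc_of_le (by norm_num : (0:ℝ) ≤ 1/2)] at hu'
      have hlt : u < 1/2 := lt_of_le_of_ne hu'.2 hu
      have hev : γh =ᶠ[nhds u] f := by
        filter_upwards [Iio_mem_nhds hlt] with w hw
        rw [hγh]; simp only; rw [if_pos (le_of_lt hw)]
      have hd : deriv γh u = deriv f u := hev.deriv_eq
      have hfd : HasDerivAt f ((2:ℝ) • v0) u := by
        have : HasDerivAt (fun t : ℝ => 2 * t) 2 u := by
          simpa using (hasDerivAt_id u).const_mul (2:ℝ)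
        exact (this.smul_const v0).const_add y
      have hγhu : γh u = f u := by rw [hγh]; simp only; rw [if_pos (le_of_lt hlt)]
      rw [hγhu, hd, hfd.deriv, norm_smul, Real.norm_eq_abs]
      norm_num
    rw [hcongr]
    have hb : (∫ u in (0:ℝ)..(1/2), φ (f u) * (2 * ‖v0‖))
        ≤ ∫ _ in (0:ℝ)..(1/2), M * (2 * ‖v0‖) := by
      refine intervalIntegral.integral_mono_on (by norm_num) ?_ intervalIntegrable_const
        fun u hu => mul_le_mul_of_nonneg_right (hM _ (hfmem u hu)) (by positivity)
      refine ContinuousOn.intervalIntegrable ?_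
      rw [uIcc_of_le (by norm_num : (0:ℝ) ≤ 1/2)]
      exact (hφc.comp (by fun_prop) hfmem).mul continuousOn_const
    refine hb.trans ?_
    rw [intervalIntegral.integral_const, smul_eq_mul, hv0, norm_sub_rev z y]
    apply le_of_eq
    ring
  have hpart2 : (∫ u in (1/2:ℝ)..1, φ (γh u) * ‖deriv γh u‖)
      = ∫ v in (0:ℝ)..1, φ (γ v) * ‖deriv γ v‖ := by
    have hcongr : (∫ u in (1/2:ℝ)..1, φ (γh u) * ‖deriv γh u‖)
        = ∫ u in (1/2:ℝ)..1, 2 * ((fun v => φ (γ v) * ‖deriv γ v‖) (2 * u + (-1))) := by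
      refine intervalIntegral.integral_congr_ae ?_
      filter_upwards [hae] with u hu hu'
      rw [uIoc_of_le (by norm_num : (1/2:ℝ) ≤ 1)] at hu'
      have hgt : 1/2 < u := hu'.1
      have hev : γh =ᶠ[nhds u] g := by
        filter_upwards [Ioi_mem_nhds hgt] with w hw
        rw [hγh]; simp only; rw [if_neg (not_le.2 hw)]
      have hd : deriv γh u = deriv g u := hev.deriv_eq
      have hγhu : γh u = g u := by rw [hγh]; simp only; rw [if_neg (not_le.2 hgt)]
      rw [hγhu, hd, hgdef]
      simp only
      rw [deriv_comp_affine γ 2 (-1) two_ne_zero u, norm_smul, Real.norm_eq_abs]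
      norm_num
      ring
    rw [hcongr, intervalIntegral.integral_const_mul]
    have := intervalIntegral.smul_integral_comp_mul_add
      (fun v => φ (γ v) * ‖deriv γ v‖) (2:ℝ) (-1) (a := 1/2) (b := 1)
    norm_num at this
    exact this
  rw [hpart2]
  exact add_le_add hpart1 le_rfl

theorem geodDist_triangle_seg (hφc : ContinuousOn φ (closure Ω))
    (hφ : ∀ z ∈ closure Ω, 0 ≤ φ z) (hconv : Convex ℝ (closure Ω))
    {M : ℝ} (hM : ∀ w ∈ closure Ω, φ w ≤ M) {x₁ : E2} (hx₁ : x₁ ∈ closure Ω)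
    {y z : E2} (hy : y ∈ closure Ω) (hz : z ∈ closure Ω) :
    geodDist Ω φ y x₁ ≤ M * ‖y - z‖ + geodDist Ω φ z x₁ := by
  have hne : (geodSet Ω φ z x₁).Nonempty := ⟨_, segment_mem hconv hz hx₁⟩
  rw [geodDist_eq Ω φ z x₁, ← sub_le_iff_le_add']
  refine le_csInf hne fun L hL => ?_
  rw [sub_le_iff_le_add']
  obtain ⟨γ, ⟨K, hγl⟩, hγΩ, hγ0, hγ1, hLe⟩ := hL
  obtain ⟨J, hJmem, hJle⟩ := concat_cost hφc hconv hM hy hz hγl hγΩ hγ0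
  rw [hγ1] at hJmem
  rw [geodDist_eq]
  refine (csInf_le (bddBelow_geodSet hφ _ _) hJmem).trans (hJle.trans ?_)
  rw [hLe]

/-- Theorem: the sublevel sets `{y ∈ closure Ω : d_φ(y,x₁) ≤ t}` are compact and connected. -/
theorem sublevel_compact_connected (Ω : Set E2)
    (hΩo : IsOpen Ω) (hΩb : Bornology.IsBounded Ω) (hΩconv : Convex ℝ Ω)
    (φ : E2 → ℝ) (hφc : ContinuousOn φ (closure Ω))
    (hφ : ∀ z ∈ closure Ω, 0 ≤ φ z)
    (x₁ : E2) (hx₁ : x₁ ∈ closure Ω) (t : ℝ) (ht : 0 ≤ t) :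
    IsCompact {y ∈ closure Ω | geodDist Ω φ y x₁ ≤ t} ∧
    IsConnected {y ∈ closure Ω | geodDist Ω φ y x₁ ≤ t} := by
  have hCc : IsCompact (closure Ω) :=
    Metric.isCompact_of_isClosed_isBounded isClosed_closure hΩb.closure
  have hconv : Convex ℝ (closure Ω) := hΩconv.closure
  obtain ⟨M, hMb⟩ := hCc.exists_bound_of_continuousOn hφc
  have hM : ∀ w ∈ closure Ω, φ w ≤ M := fun w hw =>
    (le_abs_self _).trans (by simpa [Real.norm_eq_abs] using hMb w hw)
  have hM0 : 0 ≤ M := (norm_nonneg _).trans (hMb x₁ hx₁)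
  set D : E2 → ℝ := fun y => geodDist Ω φ y x₁ with hD
  -- Lipschitz continuity of D on closure Ω
  have hDlip : LipschitzOnWith M.toNNReal D (closure Ω) := by
    refine LipschitzOnWith.of_dist_le_mul fun y hy z hz => ?_
    rw [Real.dist_eq, dist_eq_norm, Real.coe_toNNReal M hM0]
    rw [abs_sub_le_iff]
    constructor
    · have := geodDist_triangle_seg hφc hφ hconv hM hx₁ hy hz
      linarith
    · have := geodDist_triangle_seg hφc hφ hconv hM hx₁ hz hy
      rw [norm_sub_rev] at this
      linarith
  have hDcont : ContinuousOn D (closure Ω) := hDlip.continuousOn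
  have hSclosed : ∀ r : ℝ, IsClosed {y ∈ closure Ω | D y ≤ r} := by
    intro r
    have : {y ∈ closure Ω | D y ≤ r} = closure Ω ∩ D ⁻¹' (Iic r) := by
      ext y; simp [mem_preimage, mem_Iic]
    rw [this]
    exact hDcont.preimage_isClosed_of_isClosed isClosed_closure isClosed_Iic
  have hScomp : IsCompact {y ∈ closure Ω | D y ≤ t} :=
    hCc.of_isClosed_subset (hSclosed t) (fun y hy => hy.1)
  refine ⟨hScomp, ?_⟩
  have hDx₁ : D x₁ ≤ 0 := geodDist_self_nonpos hφ hx₁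
  -- strict sublevel sets are path connected
  have hopen_conn : ∀ r : ℝ, 0 < r → IsConnected {y ∈ closure Ω | D y < r} := by
    intro r hr
    refine IsPathConnected.isConnected ⟨x₁, ⟨hx₁, lt_of_le_of_lt hDx₁ hr⟩, ?_⟩
    intro y hy
    obtain ⟨hyC, hylt⟩ := hy
    have hne : (geodSet Ω φ y x₁).Nonempty := ⟨_, segment_mem hconv hyC hx₁⟩
    obtain ⟨L, hL, hLlt⟩ := exists_lt_of_csInf_lt hne (by rw [hD] at hylt; exact hylt)
    obtain ⟨γ, ⟨K, hγl⟩, hγΩ, hγ0, hγ1, hLe⟩ := hL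
    have hkey : ∀ s ∈ Icc (0:ℝ) 1, γ s ∈ {y ∈ closure Ω | D y < r} := by
      intro s hs
      refine ⟨hγΩ s hs, ?_⟩
      have h1 : D (γ s) ≤ ∫ v in s..1, φ (γ v) * ‖deriv γ v‖ := by
        rw [hD]
        simp only
        rw [← hγ1]
        exact geodDist_le_subcurve hφ hγl hγΩ hs
      have hi1 : IntervalIntegrable (fun v => φ (γ v) * ‖deriv γ v‖) volume 0 s :=
        adm_integrable hφc hγl hγΩ le_rfl hs.1 hs.2
      have hi2 : IntervalIntegrable (fun v => φ (γ v) * ‖deriv γ v‖) volume s 1 :=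
        adm_integrable hφc hγl hγΩ hs.1 hs.2 le_rfl
      have hsplit : (∫ v in (0:ℝ)..s, φ (γ v) * ‖deriv γ v‖)
          + ∫ v in s..1, φ (γ v) * ‖deriv γ v‖ = ∫ v in (0:ℝ)..1, φ (γ v) * ‖deriv γ v‖ :=
        intervalIntegral.integral_add_adjacent_intervals hi1 hi2
      have hpos : 0 ≤ ∫ v in (0:ℝ)..s, φ (γ v) * ‖deriv γ v‖ :=
        adm_nonneg hφ hγΩ le_rfl hs.1 hs.2
      have h2 : (∫ v in s..1, φ (γ v) * ‖deriv γ v‖) ≤ L := by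
        rw [hLe]; linarith
      linarith
    have hjoined : JoinedIn {y ∈ closure Ω | D y < r} y x₁ := by
      refine ⟨⟨⟨fun u => γ u, hγl.continuous.comp continuous_subtype_val⟩, ?_, ?_⟩, ?_⟩
      · simpa using hγ0
      · simpa using hγ1
      · intro u
        exact hkey u u.2
    exact hjoined.symm
  -- nested intersection
  set Kn : ℕ → Set E2 := fun n => closure {y ∈ closure Ω | D y < t + 1/(n+1)} with hKn
  have hrpos : ∀ n : ℕ, (0:ℝ) < t + 1/(n+1) := fun n => by positivity
  have hKsubC : ∀ n, Kn n ⊆ {y ∈ closure Ω | D y ≤ t + 1/(n+1)} := by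
    intro n
    refine closure_minimal (fun y hy => ⟨hy.1, le_of_lt hy.2⟩) (hSclosed _)
  have hKcomp : ∀ n, IsCompact (Kn n) := by
    intro n
    refine hCc.of_isClosed_subset isClosed_closure ?_
    exact (hKsubC n).trans fun y hy => hy.1
  have hKconn : ∀ n, IsConnected (Kn n) := fun n => (hopen_conn _ (hrpos n)).closure
  have hKanti : Antitone Kn := by
    intro m n hmn
    refine closure_mono fun y hy => ⟨hy.1, lt_of_lt_of_le hy.2 ?_⟩
    have : (1:ℝ)/(n+1) ≤ 1/(m+1) := by
      apply one_div_le_one_div_of_le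
      · positivity
      · exact_mod_cast Nat.succ_le_succ hmn
    linarith
  have hEq : {y ∈ closure Ω | D y ≤ t} = ⋂ n, Kn n := by
    apply Subset.antisymm
    · intro y hy
      refine mem_iInter.2 fun n => subset_closure ⟨hy.1, lt_of_le_of_lt hy.2 ?_⟩
      have := hrpos n
      have h1 : (0:ℝ) < 1/(n+1) := by positivity
      linarith
    · intro y hy
      have hyC : y ∈ closure Ω := (hKsubC 0 (mem_iInter.1 hy 0)).1
      refine ⟨hyC, ?_⟩
      by_contra hcon
      push_neg at hcon
      obtain ⟨n, hn⟩ := exists_nat_one_div_lt (sub_pos.2 hcon)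
      have := (hKsubC n (mem_iInter.1 hy n)).2
      have : D y ≤ t + 1/(n+1) := by exact_mod_cast this
      linarith [hn]
  rw [hEq]
  exact inter_conn Kn hKcomp hKconn hKanti
end
end

section
/- Let Ω ⊂ ℝ² be a bounded open convex set and let φ_n, φ : closure(Ω) → [0,∞) be continuous functions such that φ_n → φ uniformly on closure(Ω) and such that there is a constant c > 0 with φ_n ≥ c for all n. Then for all x, y ∈ closure(Ω), d_{φ_n}(x,y) → d_φ(x,y) as n → ∞. -/
open MeasureTheory Metric Set Filter
open scoped ENNReal NNReal Topology

noncomputable section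

def costSet (Ω : Set E2) (φ : E2 → ℝ) (x y : E2) : Set ℝ :=
  { L : ℝ | ∃ γ : ℝ → E2, (∃ K : ℝ≥0, LipschitzWith K γ) ∧
    (∀ t ∈ Icc (0:ℝ) 1, γ t ∈ closure Ω) ∧ γ 0 = x ∧ γ 1 = y ∧
    L = ∫ t in (0:ℝ)..1, φ (γ t) * ‖deriv γ t‖ }

lemma norm_deriv_le {γ : ℝ → E2} {K : ℝ≥0} (hγ : LipschitzWith K γ) (t : ℝ) :
    ‖deriv γ t‖ ≤ K :=
  norm_deriv_le_of_lipschitz hγ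

lemma intervalIntegrable_norm_deriv {γ : ℝ → E2} {K : ℝ≥0} (hγ : LipschitzWith K γ) :
    IntervalIntegrable (fun t => ‖deriv γ t‖) volume 0 1 := by
  rw [intervalIntegrable_iff_integrableOn_Icc_of_le zero_le_one]
  refine ⟨(measurable_deriv γ).norm.aestronglyMeasurable.restrict, ?_⟩
  apply HasFiniteIntegral.of_bounded (C := (K : ℝ))
  filter_upwards with t
  simpa [abs_of_nonneg (norm_nonneg _)] using norm_deriv_le hγ t

lemma cost_integrable {Ω : Set E2} (hK : IsCompact (closure Ω)) {ψ : E2 → ℝ}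
    (hψ : ContinuousOn ψ (closure Ω)) {γ : ℝ → E2} {K : ℝ≥0} (hγ : LipschitzWith K γ)
    (hmem : ∀ t ∈ Icc (0:ℝ) 1, γ t ∈ closure Ω) :
    IntervalIntegrable (fun t => ψ (γ t) * ‖deriv γ t‖) volume 0 1 := by
  obtain ⟨C, hC⟩ := hK.exists_bound_of_continuousOn hψ
  rw [intervalIntegrable_iff_integrableOn_Icc_of_le zero_le_one]
  constructor
  · exact ((hψ.comp hγ.continuous.continuousOn hmem).aestronglyMeasurable
      measurableSet_Icc).mul ((measurable_deriv γ).norm.aestronglyMeasurable.restrict)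
  · apply HasFiniteIntegral.of_bounded (C := C * K)
    filter_upwards [ae_restrict_mem measurableSet_Icc] with t ht
    have h1 : |ψ (γ t)| ≤ C := hC _ (hmem t ht)
    have h2 : ‖deriv γ t‖ ≤ K := norm_deriv_le hγ t
    calc ‖ψ (γ t) * ‖deriv γ t‖‖ = |ψ (γ t)| * ‖deriv γ t‖ := by
          rw [Real.norm_eq_abs, abs_mul, abs_of_nonneg (norm_nonneg _)]
      _ ≤ C * K := mul_le_mul h1 h2 (norm_nonneg _) ((abs_nonneg _).trans h1)

lemma cost_nonneg {Ω : Set E2} {ψ : E2 → ℝ} (hψ0 : ∀ z ∈ closure Ω, 0 ≤ ψ z)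
    {x y : E2} {L : ℝ} (hL : L ∈ costSet Ω ψ x y) : 0 ≤ L := by
  obtain ⟨γ, hKγ, hmem, h0, h1, rfl⟩ := hL
  apply intervalIntegral.integral_nonneg zero_le_one
  intro t ht
  exact mul_nonneg (hψ0 _ (hmem t ht)) (norm_nonneg _)

lemma cost_bddBelow {Ω : Set E2} {ψ : E2 → ℝ} (hψ0 : ∀ z ∈ closure Ω, 0 ≤ ψ z)
    {x y : E2} : BddBelow (costSet Ω ψ x y) :=
  ⟨0, fun _ hL => cost_nonneg hψ0 hL⟩

/-- The straight segment gives a member of the cost set, bounded by `M * ‖y - x‖`. -/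
lemma exists_segment_cost {Ω : Set E2} (hK : IsCompact (closure Ω))
    (hconv : Convex ℝ Ω) {ψ : E2 → ℝ} (hψ : ContinuousOn ψ (closure Ω))
    {M : ℝ} (hM : ∀ z ∈ closure Ω, ψ z ≤ M)
    {x y : E2} (hx : x ∈ closure Ω) (hy : y ∈ closure Ω) :
    ∃ L ∈ costSet Ω ψ x y, L ≤ M * ‖y - x‖ := by
  set γ0 : ℝ → E2 := fun t => x + t • (y - x) with hγ0
  have hd : ∀ t, HasDerivAt γ0 (y - x) t := by
    intro t
    simpa [hγ0] using ((hasDerivAt_id t).smul_const (y - x)).const_add x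
  have hlip : LipschitzWith ‖y - x‖₊ γ0 := by
    apply LipschitzWith.of_dist_le_mul
    intro s t
    have h : γ0 s - γ0 t = (s - t) • (y - x) := by simp only [hγ0, sub_smul]; abel
    rw [dist_eq_norm, h, norm_smul, Real.dist_eq, coe_nnnorm]
    rw [Real.norm_eq_abs, mul_comm]
  have hmem : ∀ t ∈ Icc (0:ℝ) 1, γ0 t ∈ closure Ω := fun t ht =>
    hconv.closure.add_smul_sub_mem hx hy ht
  have hderiv : ∀ t, deriv γ0 t = y - x := fun t => (hd t).deriv
  refine ⟨_, ⟨γ0, ⟨_, hlip⟩, hmem, by simp [hγ0], by simp [hγ0], rfl⟩, ?_⟩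
  have hI : IntervalIntegrable (fun t => ψ (γ0 t) * ‖deriv γ0 t‖) volume 0 1 :=
    cost_integrable hK hψ hlip hmem
  calc (∫ t in (0:ℝ)..1, ψ (γ0 t) * ‖deriv γ0 t‖)
      ≤ ∫ _t in (0:ℝ)..1, M * ‖y - x‖ := by
        apply intervalIntegral.integral_mono_on zero_le_one hI intervalIntegrable_const
        intro t ht
        rw [hderiv t]
        exact mul_le_mul_of_nonneg_right (hM _ (hmem t ht)) (norm_nonneg _)
    _ = M * ‖y - x‖ := by simp

lemma geodDist_nonneg {Ω : Set E2} (hK : IsCompact (closure Ω)) (hconv : Convex ℝ Ω)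
    {ψ : E2 → ℝ} (hψ : ContinuousOn ψ (closure Ω)) (hψ0 : ∀ z ∈ closure Ω, 0 ≤ ψ z)
    {x y : E2} (hx : x ∈ closure Ω) (hy : y ∈ closure Ω) :
    0 ≤ geodDist Ω ψ x y := by
  obtain ⟨M, hM⟩ := hK.exists_bound_of_continuousOn hψ
  obtain ⟨L, hL, -⟩ := exists_segment_cost hK hconv hψ
    (fun z hz => (le_abs_self _).trans (hM z hz)) hx hy
  exact le_csInf ⟨L, hL⟩ fun b hb => cost_nonneg hψ0 hb

lemma geodDist_le_bound {Ω : Set E2} (hK : IsCompact (closure Ω)) (hconv : Convex ℝ Ω)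
    {ψ : E2 → ℝ} (hψ : ContinuousOn ψ (closure Ω)) (hψ0 : ∀ z ∈ closure Ω, 0 ≤ ψ z)
    {M : ℝ} (hM : ∀ z ∈ closure Ω, ψ z ≤ M)
    {x y : E2} (hx : x ∈ closure Ω) (hy : y ∈ closure Ω) :
    geodDist Ω ψ x y ≤ M * ‖y - x‖ := by
  obtain ⟨L, hL, hLle⟩ := exists_segment_cost hK hconv hψ hM hx hy
  exact le_trans (csInf_le (cost_bddBelow hψ0) hL) hLle

/-- Comparison: if `ψ1 ≥ c` and `|ψ1 - ψ2| ≤ ε` on `closure Ω`, then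
`d_{ψ2} ≤ (1 + ε/c) d_{ψ1}`. -/
lemma geodDist_comp {Ω : Set E2} (hK : IsCompact (closure Ω)) (hconv : Convex ℝ Ω)
    {ψ1 ψ2 : E2 → ℝ} (hψ1 : ContinuousOn ψ1 (closure Ω)) (hψ2 : ContinuousOn ψ2 (closure Ω))
    (hψ2_0 : ∀ z ∈ closure Ω, 0 ≤ ψ2 z)
    {c ε : ℝ} (hc : 0 < c) (hε : 0 ≤ ε)
    (hlow : ∀ z ∈ closure Ω, c ≤ ψ1 z)
    (hdiff : ∀ z ∈ closure Ω, |ψ1 z - ψ2 z| ≤ ε)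
    {x y : E2} (hx : x ∈ closure Ω) (hy : y ∈ closure Ω) :
    geodDist Ω ψ2 x y ≤ (1 + ε / c) * geodDist Ω ψ1 x y := by
  have ha : (0:ℝ) < 1 + ε / c := by positivity
  obtain ⟨M1, hM1⟩ := hK.exists_bound_of_continuousOn hψ1
  obtain ⟨L1, hL1, -⟩ := exists_segment_cost hK hconv hψ1
    (fun z hz => (le_abs_self _).trans (hM1 z hz)) hx hy
  have key : ∀ L ∈ costSet Ω ψ1 x y, geodDist Ω ψ2 x y ≤ (1 + ε / c) * L := by
    rintro L ⟨γ, ⟨K, hγ⟩, hmem, h0, h1, rfl⟩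
    set g : ℝ → ℝ := fun t => ‖deriv γ t‖ with hg
    have hgI : IntervalIntegrable g volume 0 1 := intervalIntegrable_norm_deriv hγ
    have hI1 : IntervalIntegrable (fun t => ψ1 (γ t) * g t) volume 0 1 :=
      cost_integrable hK hψ1 hγ hmem
    have hI2 : IntervalIntegrable (fun t => ψ2 (γ t) * g t) volume 0 1 :=
      cost_integrable hK hψ2 hγ hmem
    set L := ∫ t in (0:ℝ)..1, ψ1 (γ t) * g t with hLdef
    set L2 := ∫ t in (0:ℝ)..1, ψ2 (γ t) * g t with hL2def
    set lenγ := ∫ t in (0:ℝ)..1, g t with hlen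
    have hlen_nonneg : 0 ≤ lenγ := by
      apply intervalIntegral.integral_nonneg zero_le_one
      intro t _; exact norm_nonneg _
    have hclen : c * lenγ ≤ L := by
      rw [hLdef, hlen, ← intervalIntegral.integral_const_mul]
      apply intervalIntegral.integral_mono_on zero_le_one (hgI.const_mul c) hI1
      intro t ht
      exact mul_le_mul_of_nonneg_right (hlow _ (hmem t ht)) (norm_nonneg _)
    have hL2le : L2 ≤ L + ε * lenγ := by
      have : L2 ≤ ∫ t in (0:ℝ)..1, (ψ1 (γ t) * g t + ε * g t) := by
        rw [hL2def]
        apply intervalIntegral.integral_mono_on zero_le_one hI2 (hI1.add (hgI.const_mul ε))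
        intro t ht
        rw [← add_mul]
        apply mul_le_mul_of_nonneg_right _ (norm_nonneg _)
        have := hdiff _ (hmem t ht)
        rw [abs_le] at this
        linarith [this.1]
      rw [intervalIntegral.integral_add hI1 (hgI.const_mul ε),
        intervalIntegral.integral_const_mul] at this
      exact this
    have hεlen : ε * lenγ ≤ (ε / c) * L := by
      have h1 : lenγ ≤ L / c := by
        rw [le_div_iff₀ hc]; linarith
      calc ε * lenγ ≤ ε * (L / c) := mul_le_mul_of_nonneg_left h1 hε
        _ = (ε / c) * L := by ring
    have hmem2 : L2 ∈ costSet Ω ψ2 x y := ⟨γ, ⟨K, hγ⟩, hmem, h0, h1, rfl⟩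
    calc geodDist Ω ψ2 x y ≤ L2 := csInf_le (cost_bddBelow hψ2_0) hmem2
      _ ≤ L + (ε / c) * L := by linarith
      _ = (1 + ε / c) * L := by ring
  have : geodDist Ω ψ2 x y / (1 + ε / c) ≤ geodDist Ω ψ1 x y := by
    apply le_csInf ⟨L1, hL1⟩
    intro L hL
    rw [div_le_iff₀ ha]
    calc geodDist Ω ψ2 x y ≤ (1 + ε / c) * L := key L hL
      _ = L * (1 + ε / c) := mul_comm _ _
  rwa [div_le_iff₀ ha, mul_comm] at this

/-- Theorem: if `φ_n → φ` uniformly on `closure Ω` and `φ_n ≥ c > 0`, then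
`d_{φ_n}(x,y) → d_φ(x,y)` for all `x, y ∈ closure Ω`. -/
theorem geodDist_continuity_of_unif_conv (Ω : Set E2)
    (hΩo : IsOpen Ω) (hΩb : Bornology.IsBounded Ω) (hΩconv : Convex ℝ Ω)
    (φn : ℕ → E2 → ℝ) (φ : E2 → ℝ)
    (hφnc : ∀ n, ContinuousOn (φn n) (closure Ω)) (hφc : ContinuousOn φ (closure Ω))
    (hφn0 : ∀ n, ∀ z ∈ closure Ω, 0 ≤ φn n z) (hφ0 : ∀ z ∈ closure Ω, 0 ≤ φ z)
    (hunif : TendstoUniformlyOn (fun n z => φn n z) φ atTop (closure Ω))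
    (c : ℝ) (hc : 0 < c) (hlow : ∀ n, ∀ z ∈ closure Ω, c ≤ φn n z) :
    ∀ x ∈ closure Ω, ∀ y ∈ closure Ω,
      Tendsto (fun n => geodDist Ω (φn n) x y) atTop (𝓝 (geodDist Ω φ x y)) := by
  intro x hx y hy
  have hK : IsCompact (closure Ω) := hΩb.isCompact_closure
  have hφlow : ∀ z ∈ closure Ω, c ≤ φ z := by
    intro z hz
    have := hunif.tendsto_at hz
    exact ge_of_tendsto this (Eventually.of_forall fun n => hlow n z hz)
  obtain ⟨C, hC⟩ := hK.exists_bound_of_continuousOn hφc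
  set d := geodDist Ω φ x y with hd
  set D := C * ‖y - x‖ with hD
  have hd0 : 0 ≤ d := geodDist_nonneg hK hΩconv hφc hφ0 hx hy
  have hdD : d ≤ D := geodDist_le_bound hK hΩconv hφc hφ0
    (fun z hz => (le_abs_self _).trans (hC z hz)) hx hy
  have hD0 : 0 ≤ D := hd0.trans hdD
  rw [Metric.tendsto_atTop]
  intro ε hε
  set δ := min c (ε * c / (2 * (D + 1))) with hδ
  have hδ0 : 0 < δ := lt_min hc (by positivity)
  have hδc : δ / c ≤ 1 := by
    rw [div_le_one hc]; exact min_le_left _ _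
  have hδc2 : δ / c ≤ ε / (2 * (D + 1)) := by
    rw [div_le_div_iff₀ hc (by positivity)]
    calc δ * (2 * (D + 1)) ≤ (ε * c / (2 * (D + 1))) * (2 * (D + 1)) := by
          apply mul_le_mul_of_nonneg_right (min_le_right _ _) (by positivity)
      _ = ε * c := by field_simp
  have hδc0 : (0:ℝ) ≤ δ / c := by positivity
  have hev := Metric.tendstoUniformlyOn_iff.mp hunif δ hδ0
  rw [eventually_atTop] at hev
  obtain ⟨N, hN⟩ := hev
  refine ⟨N, fun n hn => ?_⟩
  have hdiff1 : ∀ z ∈ closure Ω, |φ z - φn n z| ≤ δ := by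
    intro z hz
    have := hN n hn z hz
    rw [Real.dist_eq] at this
    exact this.le
  have hdiff2 : ∀ z ∈ closure Ω, |φn n z - φ z| ≤ δ := by
    intro z hz
    rw [abs_sub_comm]
    exact hdiff1 z hz
  set dn := geodDist Ω (φn n) x y with hdn
  have hdn0 : 0 ≤ dn := geodDist_nonneg hK hΩconv (hφnc n) (hφn0 n) hx hy
  have h1 : dn ≤ (1 + δ / c) * d := geodDist_comp hK hΩconv hφc (hφnc n)
    (hφn0 n) hc hδ0.le hφlow hdiff1 hx hy
  have h2 : d ≤ (1 + δ / c) * dn := geodDist_comp hK hΩconv (hφnc n) hφc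
    hφ0 hc hδ0.le (hlow n) hdiff2 hx hy
  rw [add_mul, one_mul] at h1 h2
  have t1 : δ / c * d ≤ δ / c * D := mul_le_mul_of_nonneg_left hdD hδc0
  have t2 : δ / c * D ≤ ε / (2 * (D + 1)) * D := mul_le_mul_of_nonneg_right hδc2 hD0
  have t3 : ε / (2 * (D + 1)) * D < ε := by
    rw [div_mul_eq_mul_div, div_lt_iff₀ (by positivity)]
    nlinarith
  have hdd : δ / c * d ≤ d := by nlinarith [mul_le_mul_of_nonneg_right hδc hd0]
  have hdn2 : dn ≤ 2 * D := by linarith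
  have u1 : δ / c * dn ≤ δ / c * (2 * D) := mul_le_mul_of_nonneg_left hdn2 hδc0
  have u2 : δ / c * (2 * D) ≤ ε / (2 * (D + 1)) * (2 * D) :=
    mul_le_mul_of_nonneg_right hδc2 (by linarith)
  have u3 : ε / (2 * (D + 1)) * (2 * D) < ε := by
    rw [div_mul_eq_mul_div, div_lt_iff₀ (by positivity)]
    nlinarith
  rw [Real.dist_eq, abs_sub_lt_iff]
  constructor <;> linarith
end
end
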